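/- arXiv:2408.07546 — 3 statements merged into one kernel-verified Lean document; each statement's English description precedes it below -/
import Mathlib

section
/- Let M be a matroid, B a basis of M, and e ∈ B. If r ∉ B is such that B − e + r is independent and r has minimum weight among all such replacement candidates (with respect to a weight function w : E → ℝ assigning distinct weights), and B is the unique minimum-weight basis of M, then B − e + r is a minimum-weight basis of the matroid M restricted to E − e. -/
open Finset

/-- A matroid on a finite ground set, given by its ground set and
independence predicate, following the axioms in the paper. -/
structure FinMatroid (α : Type*) [DecidableEq α] where
  E : Finset α
  Indep : Finset α → Prop
  empty_indep : Indep ∅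
  indep_subset_ground : ∀ {A}, Indep A → A ⊆ E
  indep_subset : ∀ {A B}, Indep A → B ⊆ A → Indep B
  exchange : ∀ {A B}, Indep A → Indep B → B.card < A.card →
    ∃ a ∈ A \ B, Indep (insert a B)

namespace FinMatroid

variable {α : Type*} [DecidableEq α]

/-- A basis is an inclusion-wise maximal independent set. -/
def IsBasis (M : FinMatroid α) (B : Finset α) : Prop :=
  M.Indep B ∧ ∀ A, M.Indep A → B ⊆ A → A = B

/-- Restriction of a matroid to a subset of the ground set. -/
def restrict (M : FinMatroid α) (E' : Finset α) : FinMatroid α where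
  E := M.E ∩ E'
  Indep A := M.Indep A ∧ A ⊆ E'
  empty_indep := ⟨M.empty_indep, empty_subset _⟩
  indep_subset_ground := fun h => subset_inter (M.indep_subset_ground h.1) h.2
  indep_subset := fun h hBA => ⟨M.indep_subset h.1 hBA, hBA.trans h.2⟩
  exchange := by
    intro A B hA hB hlt
    obtain ⟨x, hx, hi⟩ := M.exchange hA.1 hB.1 hlt
    exact ⟨x, hx, hi, insert_subset_iff.2 ⟨hA.2 (mem_sdiff.mp hx).1, hB.2⟩⟩

/-- Deletion of a set of elements from a matroid. -/
def delete (M : FinMatroid α) (F : Finset α) : FinMatroid α :=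
  M.restrict (M.E \ F)

/-- The weight of a set of elements. -/
def weight (w : α → ℝ) (B : Finset α) : ℝ := ∑ e ∈ B, w e

/-- A minimum-weight basis. -/
def IsMinBasis (M : FinMatroid α) (w : α → ℝ) (B : Finset α) : Prop :=
  M.IsBasis B ∧ ∀ B', M.IsBasis B' → weight w B ≤ weight w B'

/-- `r` is the (minimum-weight) replacement element of `g` in the basis `B`. -/
def IsReplacement (M : FinMatroid α) (w : α → ℝ) (B : Finset α) (g r : α) : Prop :=
  g ∈ B ∧ r ∈ M.E ∧ r ∉ B ∧ M.Indep (insert r (B.erase g)) ∧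
  ∀ r' ∈ M.E, r' ∉ B → M.Indep (insert r' (B.erase g)) → w r ≤ w r'

/-- A circuit is a minimal dependent set. -/
def IsCircuit (M : FinMatroid α) (C : Finset α) : Prop :=
  C ⊆ M.E ∧ ¬ M.Indep C ∧ ∀ x ∈ C, M.Indep (C.erase x)

end FinMatroid

open FinMatroid

variable {α : Type*} [DecidableEq α]

/-! A basis `D` of `M \ e` has the rank of `M`, so it is a basis of `M`. Symmetric exchange
gives `x ∈ D` such that `B - e + x` is independent and `D - x + e` is a basis of `M`. Then
`w(B) ≤ w(D - x + e)` by minimality of `B`, and `w(r) ≤ w(x)` because `x` is a replacement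
candidate; adding the two gives `w(B - e + r) ≤ w(D)`. -/

namespace FinMatroid

variable {M : FinMatroid α}

theorem delete_indep_iff {F A : Finset α} :
    (M.delete F).Indep A ↔ M.Indep A ∧ Disjoint A F := by
  change M.Indep A ∧ A ⊆ M.E \ F ↔ _
  rw [subset_sdiff]
  exact ⟨fun ⟨hA, _, hAF⟩ => ⟨hA, hAF⟩, fun ⟨hA, hAF⟩ => ⟨hA, M.indep_subset_ground hA, hAF⟩⟩

theorem Indep.card_le_of_forall_not_indep_insert {X Y Z : Finset α} (hX : M.Indep X)
    (hY : ∀ y ∈ Y, y ∉ X → ¬ M.Indep (insert y X)) (hZ : M.Indep Z) (hZY : Z ⊆ Y) :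
    Z.card ≤ X.card := by
  by_contra! h
  obtain ⟨z, hz, hzX⟩ := M.exchange hZ hX h
  obtain ⟨hzZ, hzX'⟩ := mem_sdiff.mp hz
  exact hY z (hZY hzZ) hzX' hzX

theorem IsBasis.card_le {A B : Finset α} (hB : M.IsBasis B) (hA : M.Indep A) :
    A.card ≤ B.card :=
  hB.1.card_le_of_forall_not_indep_insert (Y := A)
    (fun y _ hyB hyi => hyB (hB.2 _ hyi (subset_insert y B) ▸ mem_insert_self y B))
    hA subset_rfl

theorem isBasis_of_forall_card_le {A : Finset α} (hA : M.Indep A)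
    (hmax : ∀ A', M.Indep A' → A'.card ≤ A.card) : M.IsBasis A :=
  ⟨hA, fun _ hA' hAA' => (eq_of_subset_of_card_le hAA' (hmax _ hA')).symm⟩

theorem IsBasis.of_card_le {A B : Finset α} (hB : M.IsBasis B) (hA : M.Indep A)
    (hBA : B.card ≤ A.card) : M.IsBasis A :=
  isBasis_of_forall_card_le hA fun _ hA' => (hB.card_le hA').trans hBA

theorem exists_indep_maximal {S Y : Finset α} (hS : M.Indep S) (hSY : S ⊆ Y) :
    ∃ A, M.Indep A ∧ S ⊆ A ∧ A ⊆ Y ∧ ∀ y ∈ Y, y ∉ A → ¬ M.Indep (insert y A) := by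
  classical
  obtain ⟨A, hA, hmax⟩ := (Y.powerset.filter fun A => M.Indep A ∧ S ⊆ A).exists_max_image card
    ⟨S, mem_filter.mpr ⟨mem_powerset.mpr hSY, hS, subset_rfl⟩⟩
  obtain ⟨hAY, hAi, hSA⟩ := mem_filter.mp hA
  refine ⟨A, hAi, hSA, mem_powerset.mp hAY, fun y hyY hyA hyi => ?_⟩
  have := hmax (insert y A) <| mem_filter.mpr
    ⟨mem_powerset.mpr (insert_subset hyY (mem_powerset.mp hAY)), hyi,
      hSA.trans (subset_insert y A)⟩
  rw [card_insert_of_notMem hyA] at this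
  omega

/-- If no element of `D` can replace `e` in `B`, then `D ⊆ cl(B - e)` while `e ∉ cl(B - e)`,
so `e ∉ cl(D)`. -/
theorem Indep.insert_indep_of_forall_not_indep_insert_erase {B D : Finset α} {e : α}
    (hB : M.Indep B) (he : e ∈ B) (hD : M.Indep D) (heD : e ∉ D)
    (hDB : ∀ y ∈ D, y ∉ B → ¬ M.Indep (insert y (B.erase e))) : M.Indep (insert e D) := by
  by_contra hdep
  obtain ⟨W, hW, hDW, hWY, hWmax⟩ := exists_indep_maximal hD (subset_union_right (s₁ := B.erase e))
  have hWle : W.card ≤ (B.erase e).card := by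
    refine (M.indep_subset hB (erase_subset e B)).card_le_of_forall_not_indep_insert
      (fun y hy hyB => ?_) hW hWY
    have hyD := (mem_union.mp hy).resolve_left hyB
    exact hDB y hyD fun hyB' => hyB (mem_erase.mpr ⟨fun h => heD (h ▸ hyD), hyB'⟩)
  have hBle : B.card ≤ W.card := by
    refine hW.card_le_of_forall_not_indep_insert (Y := B ∪ D) (fun y hy hyW => ?_) hB
      subset_union_left
    by_cases hye : y = e
    · exact fun hi => hdep (M.indep_subset (hye ▸ hi) (insert_subset_insert e hDW))
    · refine hWmax y ?_ hyW
      rcases mem_union.mp hy with hyB | hyD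
      · exact mem_union_left _ (mem_erase.mpr ⟨hye, hyB⟩)
      · exact mem_union_right _ hyD
  rw [card_erase_of_mem he] at hWle
  have := card_pos.mpr ⟨e, he⟩
  omega

theorem card_insert_erase {S : Finset α} {a b : α} (ha : a ∉ S) (hb : b ∈ S) :
    (insert a (S.erase b)).card = S.card := by
  rw [card_insert_of_notMem fun h => ha (mem_of_mem_erase h), card_erase_of_mem hb]
  have := card_pos.mpr ⟨b, hb⟩
  omega

/-- With `P` the candidates in `D` for replacing `e` in `B`, the set `insert e (D \ P)` is
independent, and a basis inside `insert e D` extending it omits an element of `P`. -/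
theorem IsBasis.exists_symm_exchange {B D : Finset α} {e : α} (hB : M.IsBasis B)
    (hD : M.IsBasis D) (he : e ∈ B) (heD : e ∉ D) :
    ∃ x ∈ D, x ∉ B ∧ M.Indep (insert x (B.erase e)) ∧ M.IsBasis (insert e (D.erase x)) := by
  classical
  set P := D.filter fun x => x ∉ B ∧ M.Indep (insert x (B.erase e))
  have hS : M.Indep (insert e (D \ P)) :=
    hB.1.insert_indep_of_forall_not_indep_insert_erase he (M.indep_subset hD.1 sdiff_subset)
      (fun h => heD (mem_sdiff.mp h).1)
      fun y hy hyB hyi => (mem_sdiff.mp hy).2 (mem_filter.mpr ⟨(mem_sdiff.mp hy).1, hyB, hyi⟩)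
  obtain ⟨A, hA, hSA, hAD, hAmax⟩ :=
    exists_indep_maximal hS (insert_subset_insert e sdiff_subset)
  have hDA : D.card ≤ A.card :=
    hA.card_le_of_forall_not_indep_insert hAmax hD.1 (subset_insert e D)
  have hAB : M.IsBasis A := hD.of_card_le hA hDA
  obtain ⟨x, hxD, hxA⟩ : ∃ x ∈ D, x ∉ A := by
    by_contra! hDsub
    have := card_lt_card (Finset.ssubset_iff_subset_ne.mpr
      ⟨hDsub, (ne_of_mem_of_not_mem' (hSA (mem_insert_self e _)) heD).symm⟩)
    have := hD.card_le hA
    omega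
  have hxP : x ∈ P := by
    by_contra hxP
    exact hxA (hSA (mem_insert_of_mem (mem_sdiff.mpr ⟨hxD, hxP⟩)))
  obtain ⟨-, hxB, hxi⟩ := mem_filter.mp hxP
  have hA_eq : A = insert e (D.erase x) := by
    refine eq_of_subset_of_card_le (fun y hy => ?_) ?_
    · rcases mem_insert.mp (hAD hy) with rfl | hyD
      · exact mem_insert_self _ _
      · exact mem_insert_of_mem (mem_erase.mpr ⟨fun h => hxA (h ▸ hy), hyD⟩)
    · rwa [card_insert_erase heD hxD]
  exact ⟨x, hxD, hxB, hxi, hA_eq ▸ hAB⟩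

theorem weight_insert_erase (w : α → ℝ) {S : Finset α} {a b : α} (ha : a ∉ S) (hb : b ∈ S) :
    weight w (insert a (S.erase b)) = weight w S - w b + w a := by
  unfold weight
  rw [sum_insert fun h => ha (mem_of_mem_erase h), sum_erase_eq_sub hb]
  ring

end FinMatroid

theorem replacement_gives_min_basis_general (M : FinMatroid α) (w : α → ℝ)
    (B : Finset α) (hB : M.IsMinBasis w B)
    (e : α) (r : α)
    (hrepl : M.IsReplacement w B e r) :
    (M.delete {e}).IsMinBasis w (insert r (B.erase e)) := by
  obtain ⟨he, -, hrB, hri, hrmin⟩ := hrepl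
  have her : e ≠ r := fun h => hrB (h ▸ he)
  have hB'i : (M.delete {e}).Indep (insert r (B.erase e)) :=
    delete_indep_iff.mpr ⟨hri, disjoint_singleton_right.mpr (by simp [her])⟩
  have hB'card : (insert r (B.erase e)).card = B.card := card_insert_erase hrB he
  refine ⟨isBasis_of_forall_card_le hB'i fun A hA =>
    hB'card ▸ hB.1.card_le (delete_indep_iff.mp hA).1, fun D hD => ?_⟩
  obtain ⟨hDi, heD⟩ := delete_indep_iff.mp hD.1
  have hDB : M.IsBasis D := hB.1.of_card_le hDi (hB'card ▸ hD.card_le hB'i)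
  obtain ⟨x, hxD, hxB, hxi, hDx⟩ :=
    hB.1.exists_symm_exchange hDB he (disjoint_singleton_right.mp heD)
  calc weight w (insert r (B.erase e)) = weight w B - w e + w r := weight_insert_erase w hrB he
    _ ≤ weight w (insert e (D.erase x)) - w e + w x := by
      gcongr
      · exact hB.2 _ hDx
      · exact hrmin x (M.indep_subset_ground hDi hxD) hxB hxi
    _ = weight w D := by
      rw [weight_insert_erase w (disjoint_singleton_right.mp heD) hxD]
      ring

/-- the unique min-weight basis with `e` swapped for its replacement
element is a min-weight basis of the deletion matroid. -/
theorem replacement_gives_min_basis (M : FinMatroid α) (w : α → ℝ)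
    (hw : Set.InjOn w ↑M.E)
    (B : Finset α) (hB : M.IsMinBasis w B)
    (huniq : ∀ B', M.IsMinBasis w B' → B' = B)
    (e : α) (he : e ∈ B) (r : α)
    (hrepl : M.IsReplacement w B e r) :
    (M.delete {e}).IsMinBasis w (insert r (B.erase e)) :=
  replacement_gives_min_basis_general M w B hB e r hrepl
end

section
/- Let M be a matroid with weight function w, and define bases B^0, B^1, ..., B^ℓ by: B^0 is a minimum-weight basis of M, and for i > 0, B^i is a minimum-weight basis of M restricted to E \ (B^0 ∪ ... ∪ B^{i−1}). Let U^ℓ = B^0 ∪ ... ∪ B^ℓ. Then for any F ⊆ E with |F| ≤ ℓ and any e ∈ E \ F with e ∉ U^ℓ, the element e is not contained in any minimum-weight basis of M restricted to E \ F. -/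
/-!
Since the `B^i` are pairwise disjoint and `|F| ≤ ℓ`, some `B^i` with `i ≤ ℓ` avoids `F`. As `e`
lies in `E \ U^{i-1}` but not in the minimum-weight basis `B^i` of that restriction, the
fundamental circuit of `e` in `B^i + e` consists, apart from `e`, of elements lighter than `e`
(weights are distinct). This circuit avoids `F`, so it is a circuit of `M \ F`, and exchanging `e`
along it would make any basis of `M \ F` containing `e` strictly lighter.
-/

open Finset

namespace FinMatroid

variable {α : Type*} [DecidableEq α] {M : FinMatroid α}

theorem Indep.card_le_card_of_isBasis {A B : Finset α} (hA : M.Indep A) (hB : M.IsBasis B) :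
    A.card ≤ B.card := by
  by_contra! h
  obtain ⟨a, ha, hind⟩ := M.exchange hA hB.1 h
  exact (mem_sdiff.mp ha).2 (hB.2 _ hind (subset_insert _ _) ▸ mem_insert_self a B)

theorem IsBasis.isBasis_of_indep_of_card_le {B J : Finset α} (hB : M.IsBasis B)
    (hJ : M.Indep J) (hcard : B.card ≤ J.card) : M.IsBasis J :=
  ⟨hJ, fun _ hA hJA =>
    (eq_of_subset_of_card_le hJA ((hA.card_le_card_of_isBasis hB).trans hcard)).symm⟩

theorem Indep.exists_isBasis_superset {I : Finset α} (hI : M.Indep I) :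
    ∃ B, I ⊆ B ∧ M.IsBasis B := by
  have hfin : {J | M.Indep J}.Finite :=
    M.E.powerset.finite_toSet.subset fun J hJ => mem_powerset.mpr (M.indep_subset_ground hJ)
  obtain ⟨B, hIB, hB⟩ := hfin.exists_le_maximal hI
  exact ⟨B, hIB, hB.1, fun A hA hBA => subset_antisymm (hB.2 hA hBA) hBA⟩

theorem exists_isCircuit_subset {D : Finset α} (hD : ¬ M.Indep D) (hDE : D ⊆ M.E) :
    ∃ C ⊆ D, M.IsCircuit C := by
  obtain ⟨C, hCD, hC⟩ := exists_minimal_le_of_wellFoundedLT (fun C => ¬ M.Indep C) D hD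
  refine ⟨C, hCD, hCD.trans hDE, hC.1, fun x hx => ?_⟩
  by_contra hdep
  exact notMem_erase x C (hC.2 hdep (erase_subset x C) hx)

theorem isCircuit_restrict_iff {X C : Finset α} :
    (M.restrict X).IsCircuit C ↔ M.IsCircuit C ∧ C ⊆ X := by
  simp only [IsCircuit, restrict, subset_inter_iff, not_and]
  constructor
  · rintro ⟨⟨hCE, hCX⟩, hdep, hind⟩
    exact ⟨⟨hCE, fun h => hdep h hCX, fun x hx => (hind x hx).1⟩, hCX⟩
  · rintro ⟨⟨hCE, hdep, hind⟩, hCX⟩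
    exact ⟨⟨hCE, hCX⟩, fun h _ => hdep h,
      fun x hx => ⟨hind x hx, (erase_subset x C).trans hCX⟩⟩

theorem isCircuit_delete_iff {F C : Finset α} :
    (M.delete F).IsCircuit C ↔ M.IsCircuit C ∧ Disjoint C F := by
  rw [delete, isCircuit_restrict_iff]
  exact and_congr_right fun hC => by rw [subset_sdiff]; exact and_iff_right hC.1

theorem delete_empty (M : FinMatroid α) : M.delete ∅ = M := by
  rcases M with ⟨E, Indep, -, hground, -, -⟩
  simp only [delete, restrict, sdiff_empty, inter_self, FinMatroid.mk.injEq, true_and]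
  funext A
  exact propext (and_iff_left_of_imp hground)

theorem IsBasis.exists_isBasis_insert_erase {B C : Finset α} {e : α} (hB : M.IsBasis B)
    (heB : e ∈ B) (hC : M.IsCircuit C) (heC : e ∈ C) :
    ∃ g ∈ C.erase e, g ∉ B ∧ M.IsBasis (insert g (B.erase e)) := by
  obtain ⟨J, hCJ, hJ⟩ := (show (M.restrict (B.erase e ∪ C.erase e)).Indep (C.erase e) from
    ⟨hC.2.2 e heC, subset_union_right⟩).exists_isBasis_superset
  -- Augmenting `J` from `B` could only add `e`, which would close up the circuit `C`.
  have hBJ : B.card ≤ J.card := by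
    by_contra! hlt
    obtain ⟨a, ha, hind⟩ := M.exchange hB.1 hJ.1.1 hlt
    obtain ⟨haB, haJ⟩ := mem_sdiff.mp ha
    by_cases hae : a = e
    · subst hae
      refine hC.2.1 (M.indep_subset hind fun x hx => ?_)
      by_cases hxa : x = a
      · exact hxa ▸ mem_insert_self a J
      · exact mem_insert_of_mem (hCJ (mem_erase.mpr ⟨hxa, hx⟩))
    · have hX : insert a J ⊆ B.erase e ∪ C.erase e :=
        insert_subset (mem_union_left _ (mem_erase.mpr ⟨hae, haB⟩)) hJ.1.2
      exact haJ (hJ.2 _ ⟨hind, hX⟩ (subset_insert a J) ▸ mem_insert_self a J)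
  have hlt : (B.erase e).card < J.card := by
    rw [card_erase_of_mem heB]
    have := card_pos.mpr ⟨e, heB⟩
    omega
  obtain ⟨g, hg, hind⟩ := M.exchange hJ.1.1 (M.indep_subset hB.1 (erase_subset e B)) hlt
  obtain ⟨hgJ, hgBe⟩ := mem_sdiff.mp hg
  have hgCe : g ∈ C.erase e := (mem_union.mp (hJ.1.2 hgJ)).resolve_left hgBe
  have hgB : g ∉ B := fun h => hgBe (mem_erase.mpr ⟨ne_of_mem_erase hgCe, h⟩)
  refine ⟨g, hgCe, hgB, hB.isBasis_of_indep_of_card_le hind ?_⟩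
  rw [card_insert_of_notMem hgBe, card_erase_add_one heB]

variable {w : α → ℝ} {B : Finset α}

theorem IsMinBasis.le_of_isBasis_insert_erase {f g : α} (hB : M.IsMinBasis w B) (hf : f ∈ B)
    (hg : g ∉ B) (hB' : M.IsBasis (insert g (B.erase f))) : w f ≤ w g := by
  have hle := hB.2 _ hB'
  unfold weight at hle
  rw [sum_insert fun h => hg (mem_of_mem_erase h), ← add_sum_erase B w hf] at hle
  linarith

theorem IsMinBasis.exists_isCircuit_lt_of_notMem (hw : Set.InjOn w M.E) (hB : M.IsMinBasis w B)
    {e : α} (he : e ∈ M.E) (heB : e ∉ B) :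
    ∃ C, M.IsCircuit C ∧ e ∈ C ∧ C ⊆ insert e B ∧ ∀ f ∈ C.erase e, w f < w e := by
  have hdep : ¬ M.Indep (insert e B) := fun hind =>
    heB (hB.1.2 _ hind (subset_insert e B) ▸ mem_insert_self e B)
  obtain ⟨C, hCB, hC⟩ :=
    exists_isCircuit_subset hdep (insert_subset he (M.indep_subset_ground hB.1.1))
  have heC : e ∈ C := by
    by_contra heC
    exact hC.2.1 (M.indep_subset hB.1.1 fun x hx =>
      (mem_insert.mp (hCB hx)).resolve_left (ne_of_mem_of_not_mem hx heC))
  refine ⟨C, hC, heC, hCB, fun f hf => ?_⟩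
  have hfB : f ∈ B :=
    (mem_insert.mp (hCB (mem_of_mem_erase hf))).resolve_left (ne_of_mem_erase hf)
  obtain ⟨g, hgC, hgB, hB'⟩ := hB.1.exists_isBasis_insert_erase hfB hC (mem_of_mem_erase hf)
  obtain rfl : g = e := (mem_insert.mp (hCB (mem_of_mem_erase hgC))).resolve_right hgB
  refine (hB.le_of_isBasis_insert_erase hfB heB hB').lt_of_ne fun hfe => ?_
  exact ne_of_mem_erase hf (hw (hC.1 (mem_of_mem_erase hf)) he hfe)

theorem IsMinBasis.notMem_of_isCircuit_lt (hB : M.IsMinBasis w B) {C : Finset α} {e : α}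
    (hC : M.IsCircuit C) (heC : e ∈ C) (hlt : ∀ f ∈ C.erase e, w f < w e) : e ∉ B := by
  intro heB
  obtain ⟨g, hgC, hgB, hB'⟩ := hB.1.exists_isBasis_insert_erase heB hC heC
  exact (hlt g hgC).not_ge (hB.le_of_isBasis_insert_erase heB hgB hB')

end FinMatroid

theorem Finset.exists_disjoint_of_card_lt {ι β : Type*} [DecidableEq β] {s : Finset ι}
    {S : ι → Finset β} (hS : (s : Set ι).PairwiseDisjoint S) {F : Finset β}
    (hF : F.card < s.card) : ∃ i ∈ s, Disjoint (S i) F := by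
  by_contra! hmeet
  have hcover : s.card ≤ (s.biUnion fun i => S i ∩ F).card := by
    rw [card_biUnion (hS.mono fun i => inter_subset_left), card_eq_sum_ones]
    exact sum_le_sum fun i hi => card_pos.mpr (not_disjoint_iff_nonempty_inter.mp (hmeet i hi))
  have hsub : (s.biUnion fun i => S i ∩ F) ⊆ F := biUnion_subset.mpr fun _ _ => inter_subset_right
  have := card_le_card hsub
  omega

theorem Finset.pairwiseDisjoint_range_of_disjoint_biUnion {β : Type*} [DecidableEq β] {n : ℕ}
    {S : ℕ → Finset β} (hS : ∀ j < n, Disjoint (S j) ((range j).biUnion S)) :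
    (range n : Set ℕ).PairwiseDisjoint S := by
  have key : ∀ i j, i < j → j < n → Disjoint (S i) (S j) := fun i j hij hj =>
    ((hS j hj).mono_right (subset_biUnion_of_mem S (mem_range.mpr hij))).symm
  intro i hi j hj hne
  simp only [coe_range, Set.mem_Iio] at hi hj
  rcases hne.lt_or_gt with h | h
  · exact key i j h hj
  · exact (key j i h hi).symm

open FinMatroid

variable {α : Type*} [DecidableEq α]

theorem not_in_Ul_not_in_interdicted_basis_general (M : FinMatroid α) (w : α → ℝ)
    (hw : Set.InjOn w ↑M.E) (ℓ : ℕ)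
    (Bseq : ℕ → Finset α)
    (h0 : M.IsMinBasis w (Bseq 0))
    (hi : ∀ i, 0 < i → i ≤ ℓ →
      (M.delete ((Finset.range i).biUnion Bseq)).IsMinBasis w (Bseq i))
    (F : Finset α) (hFc : F.card ≤ ℓ)
    (e : α) (he : e ∈ M.E) (heF : e ∉ F)
    (heU : e ∉ (Finset.range (ℓ + 1)).biUnion Bseq)
    (B : Finset α) (hB : (M.delete F).IsMinBasis w B) : e ∉ B := by
  have hmin : ∀ i ≤ ℓ, (M.delete ((range i).biUnion Bseq)).IsMinBasis w (Bseq i) := by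
    rintro (_ | i) hiℓ
    · simpa [delete_empty] using h0
    · exact hi _ i.succ_pos hiℓ
  have hdisj : (range (ℓ + 1) : Set ℕ).PairwiseDisjoint Bseq :=
    pairwiseDisjoint_range_of_disjoint_biUnion fun j hj =>
      disjoint_of_subset_left (hmin j (by omega)).1.1.2 sdiff_disjoint
  obtain ⟨i, hir, hBiF⟩ := exists_disjoint_of_card_lt hdisj (F := F) (by rw [card_range]; omega)
  have hiℓ : i ≤ ℓ := Nat.lt_succ_iff.mp (mem_range.mp hir)
  have heUi : e ∉ (range i).biUnion Bseq := fun h =>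
    heU (biUnion_subset_biUnion_of_subset_left Bseq (range_subset_range.mpr (by omega)) h)
  obtain ⟨C, hC, heC, hCBi, hlt⟩ := (hmin i hiℓ).exists_isCircuit_lt_of_notMem
    (hw.mono inter_subset_left) (mem_inter.mpr ⟨he, mem_sdiff.mpr ⟨he, heUi⟩⟩)
    fun h => heU (mem_biUnion.mpr ⟨i, hir, h⟩)
  have hCF : Disjoint C F := disjoint_of_subset_left hCBi (disjoint_insert_left.mpr ⟨heF, hBiF⟩)
  exact hB.notMem_of_isCircuit_lt
    (isCircuit_delete_iff.mpr ⟨(isCircuit_delete_iff.mp hC).1, hCF⟩) heC hlt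

/-- with `B^0, …, B^ℓ` obtained by iterated deletion of
minimum-weight bases and `U^ℓ = B^0 ∪ ⋯ ∪ B^ℓ`, no element outside `U^ℓ`
(and outside `F`) belongs to a minimum-weight basis of `M` with `F` deleted,
for any `F` with `|F| ≤ ℓ`. -/
theorem not_in_Ul_not_in_interdicted_basis (M : FinMatroid α) (w : α → ℝ)
    (hw : Set.InjOn w ↑M.E) (ℓ k : ℕ)
    (Bseq : ℕ → Finset α)
    (h0 : M.IsMinBasis w (Bseq 0))
    (hi : ∀ i, 0 < i → i ≤ ℓ →
      (M.delete ((Finset.range i).biUnion Bseq)).IsMinBasis w (Bseq i))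
    (hcard : ∀ i ≤ ℓ, (Bseq i).card = k)
    (hrank : ∀ F ⊆ M.E, F.card ≤ ℓ →
      ∃ B, (M.delete F).IsBasis B ∧ B.card = k)
    (F : Finset α) (hF : F ⊆ M.E) (hFc : F.card ≤ ℓ)
    (e : α) (he : e ∈ M.E) (heF : e ∉ F)
    (heU : e ∉ (Finset.range (ℓ + 1)).biUnion Bseq)
    (B : Finset α) (hB : (M.delete F).IsMinBasis w B) : e ∉ B :=
  not_in_Ul_not_in_interdicted_basis_general M w hw ℓ Bseq h0 hi F hFc e he heF heU B hB
end

section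
/- With B^0, B^1, ..., B^ℓ defined by iterated deletion of minimum-weight bases, for every i ∈ {0, ..., ℓ−1} and every e ∈ B^i, the replacement element of e with respect to the basis B^i lies in B^{i+1}. -/
open Finset

open FinMatroid

variable {α : Type*} [DecidableEq α]

/-!
Suppose `r ∉ B^{i+1}`. As `r` survives the deletion of `B^0 ∪ ⋯ ∪ B^i`, it has a fundamental
circuit `C ⊆ B^{i+1} + r`, and minimality of `B^{i+1}` (with distinct weights) makes every
`y ∈ C - r` strictly lighter than `r`. Since `B^i - e + r` is independent while `r` is spanned
by `C - r`, some `y ∈ C - r` keeps `B^i - e + y` independent. Such a `y ∈ B^{i+1}` is a candidate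
replacement for `e` lighter than `r`, a contradiction.
-/

namespace FinMatroid

variable {M : FinMatroid α} {w : α → ℝ} {A B C I K X : Finset α} {r x y : α}

def IsBasisIn (M : FinMatroid α) (I X : Finset α) : Prop :=
  I ⊆ X ∧ M.Indep I ∧ ∀ x ∈ X, x ∉ I → ¬ M.Indep (insert x I)

theorem IsBasisIn.card_le_of_indep (hI : M.IsBasisIn I X) (hA : M.Indep A) (hAX : A ⊆ X) :
    A.card ≤ I.card := by
  by_contra! h
  obtain ⟨a, ha, hins⟩ := M.exchange hA hI.2.1 h
  rw [mem_sdiff] at ha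
  exact hI.2.2 a (hAX ha.1) ha.2 hins

theorem IsBasisIn.card_eq (hI : M.IsBasisIn I X) (hK : M.IsBasisIn K X) : I.card = K.card :=
  le_antisymm (hK.card_le_of_indep hI.2.1 hI.1) (hI.card_le_of_indep hK.2.1 hK.1)

theorem Indep.exists_isBasisIn_superset (hA : M.Indep A) (hAX : A ⊆ X) :
    ∃ K, A ⊆ K ∧ M.IsBasisIn K X := by
  classical
  obtain ⟨K, hK, hKmax⟩ := exists_max_image
    (X.powerset.filter fun K => A ⊆ K ∧ M.Indep K) card ⟨A, by simp [hA, hAX]⟩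
  simp only [mem_filter, mem_powerset] at hK hKmax
  refine ⟨K, hK.2.1, hK.1, hK.2.2, fun x hxX hxK hind => ?_⟩
  have := hKmax _ ⟨insert_subset hxX hK.1, hK.2.1.trans (subset_insert _ _), hind⟩
  rw [card_insert_of_notMem hxK] at this
  omega

theorem IsBasis.not_indep_insert (hB : M.IsBasis B) (hx : x ∉ B) :
    ¬ M.Indep (insert x B) :=
  fun h => hx (hB.2 _ h (subset_insert _ _) ▸ mem_insert_self x B)

theorem IsBasis.isBasisIn (hB : M.IsBasis B) (hBX : B ⊆ X) : M.IsBasisIn B X :=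
  ⟨hBX, hB.1, fun _ _ hx => hB.not_indep_insert hx⟩

theorem IsBasis.card_le_of_indep (hB : M.IsBasis B) (hA : M.Indep A) : A.card ≤ B.card :=
  (hB.isBasisIn (M.indep_subset_ground hB.1)).card_le_of_indep hA (M.indep_subset_ground hA)

theorem IsBasis.isBasis_of_indep_of_card_le_s7 (hB : M.IsBasis B) (hK : M.Indep K)
    (hcard : B.card ≤ K.card) : M.IsBasis K :=
  ⟨hK, fun _ hA hKA => (eq_of_subset_of_card_le hKA ((hB.card_le_of_indep hA).trans hcard)).symm⟩

theorem exists_isCircuit_subset_s7 (hX : X ⊆ M.E) (hXdep : ¬ M.Indep X) :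
    ∃ C ⊆ X, M.IsCircuit C := by
  classical
  obtain ⟨C, hC, hCmin⟩ := exists_min_image
    (X.powerset.filter fun C => ¬ M.Indep C) card ⟨X, by simp [hXdep]⟩
  simp only [mem_filter, mem_powerset] at hC hCmin
  refine ⟨C, hC.1, hC.1.trans hX, hC.2, fun x hx => ?_⟩
  by_contra hind
  have := hCmin _ ⟨(erase_subset _ _).trans hC.1, hind⟩
  rw [card_erase_of_mem hx] at this
  have := card_pos.2 ⟨x, hx⟩
  omega

theorem IsBasis.exists_isCircuit_subset_insert (hB : M.IsBasis B) (hr : r ∈ M.E)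
    (hrB : r ∉ B) : ∃ C, M.IsCircuit C ∧ C ⊆ insert r B := by
  obtain ⟨C, hCX, hC⟩ := exists_isCircuit_subset_s7
    (insert_subset hr (M.indep_subset_ground hB.1)) (hB.not_indep_insert hrB)
  exact ⟨C, hC, hCX⟩

theorem IsCircuit.of_restrict {E' : Finset α} (hC : (M.restrict E').IsCircuit C) :
    M.IsCircuit C :=
  ⟨hC.1.trans inter_subset_left, fun h => hC.2.1 ⟨h, hC.1.trans inter_subset_right⟩,
    fun x hx => (hC.2.2 x hx).1⟩

theorem IsCircuit.not_subset_of_indep (hC : M.IsCircuit C) (hI : M.Indep I) : ¬ C ⊆ I :=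
  fun h => hC.2.1 (M.indep_subset hI h)

theorem IsCircuit.mem_of_subset_insert (hC : M.IsCircuit C) (hI : M.Indep I)
    (hCI : C ⊆ insert r I) : r ∈ C :=
  by_contra fun hr => hC.not_subset_of_indep hI ((subset_insert_iff_of_notMem hr).1 hCI)

theorem IsCircuit.notMem_of_subset_insert (hC : M.IsCircuit C) (hI : M.Indep I)
    (hCI : C ⊆ insert r I) : r ∉ I :=
  fun hr => hC.not_subset_of_indep hI (insert_eq_of_mem hr ▸ hCI)

theorem IsBasis.insert_erase_of_isCircuit (hB : M.IsBasis B) (hC : M.IsCircuit C)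
    (hCB : C ⊆ insert r B) (hyC : y ∈ C) (hyr : y ≠ r) : M.IsBasis (insert r (B.erase y)) := by
  have hrB := hC.notMem_of_subset_insert hB.1 hCB
  obtain ⟨K, hCK, hK⟩ := (hC.2.2 y hyC).exists_isBasisIn_superset ((erase_subset y C).trans hCB)
  have hyK : y ∉ K := fun hy =>
    hC.not_subset_of_indep hK.2.1 ((insert_erase_subset y C).trans (insert_subset hy hCK))
  have hKcard : K.card = B.card := hK.card_eq (hB.isBasisIn (subset_insert r B))
  have hKeq : K = (insert r B).erase y := by
    refine eq_of_subset_of_card_le (fun x hx => mem_erase.2 ⟨?_, hK.1 hx⟩) ?_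
    · rintro rfl; exact hyK hx
    · rw [card_erase_of_mem (hCB hyC), card_insert_of_notMem hrB, hKcard]; simp
  rw [← erase_insert_of_ne hyr.symm, ← hKeq]
  exact hB.isBasis_of_indep_of_card_le_s7 hK.2.1 hKcard.ge

theorem IsCircuit.exists_insert_indep (hC : M.IsCircuit C) (hrC : r ∈ C)
    (hrI : r ∉ I) (hI : M.Indep (insert r I)) :
    ∃ y ∈ C, y ≠ r ∧ y ∉ I ∧ M.Indep (insert y I) := by
  by_contra! h
  have hIbasis : M.IsBasisIn I (I ∪ C.erase r) := by
    refine ⟨subset_union_left, M.indep_subset hI (subset_insert r I), fun x hx hxI => ?_⟩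
    obtain ⟨hxr, hxC⟩ := mem_erase.1 ((mem_union.1 hx).resolve_left hxI)
    exact h x hxC hxr hxI
  obtain ⟨K, hCK, hK⟩ := (hC.2.2 r hrC).exists_isBasisIn_superset
    ((erase_subset r C).trans (subset_union_right (s₁ := I)))
  have hrK : r ∈ K := by
    by_contra hrK
    have hKsub : K ⊆ I ∪ C.erase r := fun x hx =>
      (mem_union.1 (hK.1 hx)).elim (mem_union_left _)
        fun hxC => mem_union_right _ (mem_erase.2 ⟨fun hxr => hrK (hxr ▸ hx), hxC⟩)
    have h₁ := hIbasis.card_le_of_indep hK.2.1 hKsub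
    have h₂ := hK.card_le_of_indep hI (insert_subset (mem_union_right _ hrC) subset_union_left)
    rw [card_insert_of_notMem hrI] at h₂
    omega
  exact hC.not_subset_of_indep hK.2.1 ((insert_erase_subset r C).trans (insert_subset hrK hCK))

theorem IsMinBasis.le_of_isBasis_insert_erase_s7 (hB : M.IsMinBasis w B)
    (hyB : y ∈ B) (hrB : r ∉ B) (h : M.IsBasis (insert r (B.erase y))) : w y ≤ w r := by
  have := hB.2 _ h
  rw [weight, weight, sum_insert fun hr => hrB (mem_of_mem_erase hr),
    ← add_sum_erase B w hyB] at this
  linarith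

theorem IsMinBasis.lt_of_mem_isCircuit (hB : M.IsMinBasis w B)
    (hw : Set.InjOn w M.E) (hC : M.IsCircuit C) (hCB : C ⊆ insert r B) (hyC : y ∈ C)
    (hyr : y ≠ r) : w y < w r := by
  have hrC := hC.mem_of_subset_insert hB.1.1 hCB
  have hle := hB.le_of_isBasis_insert_erase_s7 ((mem_insert.1 (hCB hyC)).resolve_left hyr)
    (hC.notMem_of_subset_insert hB.1.1 hCB) (hB.1.insert_erase_of_isCircuit hC hCB hyC hyr)
  exact hle.lt_of_ne fun h => hyr (hw (hC.1 hyC) (hC.1 hrC) h)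

theorem mem_delete_ground {F : Finset α} {x : α} : x ∈ (M.delete F).E ↔ x ∈ M.E \ F := by
  simp only [delete, restrict, mem_inter, mem_sdiff]
  tauto

end FinMatroid

theorem replacement_in_next_basis_general (M : FinMatroid α) (w : α → ℝ)
    (hw : Set.InjOn w ↑M.E) (ℓ : ℕ)
    (Bseq : ℕ → Finset α)
    (hi : ∀ i, 0 < i → i ≤ ℓ →
      (M.delete ((Finset.range i).biUnion Bseq)).IsMinBasis w (Bseq i))
    (i : ℕ) (hiℓ : i < ℓ)
    (e r : α)
    (hrepl : (M.delete ((Finset.range i).biUnion Bseq)).IsReplacement w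
      (Bseq i) e r) :
    r ∈ Bseq (i + 1) := by
  set F := (Finset.range i).biUnion Bseq
  obtain ⟨-, hrE, hrB, hrI, hrmin⟩ := hrepl
  have hB₁ : (M.delete (Bseq i ∪ F)).IsMinBasis w (Bseq (i + 1)) := by
    simpa only [range_add_one, biUnion_insert] using hi (i + 1) i.succ_pos hiℓ
  by_contra hrB₁
  have hrE₁ : r ∈ (M.delete (Bseq i ∪ F)).E := by
    rw [mem_delete_ground] at hrE ⊢
    rw [sdiff_union_distrib]
    exact mem_inter.2 ⟨mem_sdiff.2 ⟨(mem_sdiff.1 hrE).1, hrB⟩, hrE⟩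
  obtain ⟨C, hC, hCB⟩ := hB₁.1.exists_isCircuit_subset_insert hrE₁ hrB₁
  have hrC := hC.mem_of_subset_insert hB₁.1.1 hCB
  obtain ⟨y, hyC, hyr, -, hyI⟩ :=
    hC.of_restrict.exists_insert_indep hrC (fun h => hrB (mem_of_mem_erase h)) hrI.1
  have hy_lt := hB₁.lt_of_mem_isCircuit (hw.mono (coe_subset.2 inter_subset_left)) hC hCB hyC hyr
  have hy : y ∈ M.E \ (Bseq i ∪ F) :=
    hB₁.1.1.2 ((mem_insert.1 (hCB hyC)).resolve_left hyr)
  simp only [mem_sdiff, mem_union, not_or] at hy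
  have hyF : y ∈ (M.delete F).E := mem_delete_ground.2 (mem_sdiff.2 ⟨hy.1, hy.2.2⟩)
  have := hrmin y hyF hy.2.1
    ⟨hyI, insert_subset (mem_delete_ground.1 hyF) ((subset_insert _ _).trans hrI.2)⟩
  linarith

/-- for `e ∈ B^i`, the replacement element of `e` with respect to
`B^i` (taken in the matroid obtained from `M` by deleting `B^0 ∪ ⋯ ∪ B^{i-1}`)
lies in `B^{i+1}`. -/
theorem replacement_in_next_basis (M : FinMatroid α) (w : α → ℝ)
    (hw : Set.InjOn w ↑M.E) (ℓ k : ℕ)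
    (Bseq : ℕ → Finset α)
    (h0 : M.IsMinBasis w (Bseq 0))
    (hi : ∀ i, 0 < i → i ≤ ℓ →
      (M.delete ((Finset.range i).biUnion Bseq)).IsMinBasis w (Bseq i))
    (hcard : ∀ i ≤ ℓ, (Bseq i).card = k)
    (i : ℕ) (hiℓ : i < ℓ)
    (e r : α) (he : e ∈ Bseq i)
    (hrepl : (M.delete ((Finset.range i).biUnion Bseq)).IsReplacement w
      (Bseq i) e r) :
    r ∈ Bseq (i + 1) :=
  replacement_in_next_basis_general M w hw ℓ Bseq hi i hiℓ e r hrepl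
end
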